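/- The function t ↦ log(Φ(−t)) + t²/2 is strictly decreasing on ℝ, where Φ(x) = ∫_{−∞}^x (2π)^{−1/2} e^{−u²/2} du is the standard normal cumulative distribution function. -/

import Mathlib

open Real MeasureTheory Set

/-!
Substituting `u = t + v` in the Gaussian tail gives
`e^{t²/2} ∫_t^∞ e^{-u²/2} du = ∫_0^∞ e^{-t v - v²/2} dv`,
so `log Φ(-t) + t²/2` is, up to the constant `-log √(2π)`, the logarithm of this Laplace-type
integral. Its integrand is positive and, for every `v > 0`, strictly decreasing in `t`.
-/

theorem integral_lt_integral_of_ae_lt {α : Type*} [MeasurableSpace α] {μ : Measure α} [NeZero μ]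
    {f g : α → ℝ} (hf : Integrable f μ) (hg : Integrable g μ) (hlt : ∀ᵐ x ∂μ, f x < g x) :
    ∫ x, f x ∂μ < ∫ x, g x ∂μ := by
  rw [← sub_pos, ← integral_sub hg hf,
    integral_pos_iff_support_of_nonneg_ae (hlt.mono fun x h => sub_nonneg.2 h.le) (hg.sub hf)]
  refine (pos_iff_ne_zero.2 (Measure.measure_univ_ne_zero.2 (NeZero.ne μ))).trans_le
    (measure_mono_ae ?_)
  filter_upwards [hlt] with x hx _
  exact sub_ne_zero.2 hx.ne'

theorem integral_Ioi_comp_add_right {E : Type*} [NormedAddCommGroup E] [NormedSpace ℝ E]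
    (f : ℝ → E) (a t : ℝ) : ∫ v in Ioi a, f (v + t) = ∫ u in Ioi (a + t), f u := by
  have := (measurePreserving_add_right volume t).setIntegral_preimage_emb
    (MeasurableEquiv.addRight t).measurableEmbedding f (Ioi (a + t))
  rwa [preimage_add_const_Ioi, add_sub_cancel_right] at this

instance neZero_volume_Ioi (a : ℝ) : NeZero (volume (Ioi a)) := ⟨by simp⟩

/-- Mills' ratio `(1 - Φ t) / φ t` of the standard normal distribution. -/
noncomputable def millsRatio (t : ℝ) : ℝ := ∫ v in Ioi 0, exp (-t * v - v ^ 2 / 2)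

theorem integrable_exp_neg_mul_sub_sq_div_two (t : ℝ) :
    Integrable fun v : ℝ => exp (-t * v - v ^ 2 / 2) := by
  have hsq : ∀ v : ℝ, exp (-t * v - v ^ 2 / 2) = exp (t ^ 2 / 2) * exp (-(1 / 2) * (v + t) ^ 2) :=
    fun v => by rw [← exp_add]; ring_nf
  simpa only [hsq] using
    ((integrable_exp_neg_mul_sq (by norm_num : (0 : ℝ) < 1 / 2)).comp_add_right t).const_mul _

theorem integral_Iic_neg_exp_neg_sq_div_two (t : ℝ) :
    ∫ u in Iic (-t), exp (-u ^ 2 / 2) = exp (-t ^ 2 / 2) * millsRatio t := by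
  rw [← integral_comp_neg_Ioi, ← zero_add t, ← integral_Ioi_comp_add_right, zero_add, millsRatio,
    ← integral_const_mul]
  congr 1 with v
  rw [← exp_add]
  ring_nf

theorem millsRatio_pos (t : ℝ) : 0 < millsRatio t :=
  integral_exp_pos (integrable_exp_neg_mul_sub_sq_div_two t).integrableOn

theorem millsRatio_strictAnti : StrictAnti millsRatio := by
  intro s t hst
  refine integral_lt_integral_of_ae_lt (integrable_exp_neg_mul_sub_sq_div_two t).integrableOn
    (integrable_exp_neg_mul_sub_sq_div_two s).integrableOn ?_
  filter_upwards [self_mem_ae_restrict measurableSet_Ioi] with v (hv : 0 < v)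
  gcongr

/-- The function `t ↦ log(Φ(−t)) + t²/2` is strictly decreasing on `ℝ`, where `Φ` is
the standard normal cumulative distribution function. -/
theorem log_gauss_cdf_add_sq_strictAnti
    (Φ : ℝ → ℝ)
    (hΦ : ∀ x, Φ x = ∫ u in Set.Iic x, (2 * π) ^ (-(1 : ℝ) / 2) * Real.exp (-u ^ 2 / 2)) :
    StrictAnti (fun t : ℝ => Real.log (Φ (-t)) + t ^ 2 / 2) := by
  set c : ℝ := (2 * π) ^ (-(1 : ℝ) / 2)
  have hc : 0 < c := by positivity
  have hlog : ∀ t, log (Φ (-t)) + t ^ 2 / 2 = log c + log (millsRatio t) := fun t => by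
    rw [hΦ, integral_const_mul, integral_Iic_neg_exp_neg_sq_div_two, ← mul_assoc,
      log_mul (by positivity) (millsRatio_pos t).ne', log_mul hc.ne' (exp_pos _).ne', log_exp]
    ring
  intro s t hst
  simp only [hlog]
  exact (add_lt_add_iff_left _).2 (log_lt_log (millsRatio_pos t) (millsRatio_strictAnti hst))
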